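/- Let u*, w, u_d be measurable functions on Ω with u_d ≤ w almost everywhere, let v = min{u*, w}, and let 1 ≤ p < ∞. If ‖v − u_d‖_{L^p(Ω)} = ‖u* − u_d‖_{L^p(Ω)} < ∞, then u* ≤ w almost everywhere in Ω. (Key step: |w − u_d| < |u* − u_d| pointwise on {u* > w}, so equality of L^p norms forces {u* > w} to be Lebesgue-null.) -/

import Mathlib

open MeasureTheory
open scoped ENNReal

/-!
Truncating `u*` at the obstacle `w ≥ u_d` can only move it closer to `u_d`, and strictly so on
`{u* > w}`. Hence `|v − u_d| ≤ |u* − u_d|` a.e., and equality of the (finite) `L^p` norms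
forces equality almost everywhere, which is impossible on `{u* > w}` unless that set is null.
-/

theorem abs_min_sub_le_abs_sub {a b c : ℝ} (hcb : c ≤ b) : |min a b - c| ≤ |a - c| := by
  rcases le_total a b with hab | hba
  · rw [min_eq_left hab]
  · rw [min_eq_right hba, abs_of_nonneg (sub_nonneg.2 hcb), abs_of_nonneg (by linarith)]
    linarith

theorem abs_min_sub_lt_abs_sub {a b c : ℝ} (hcb : c ≤ b) (hba : b < a) :
    |min a b - c| < |a - c| := by
  rw [min_eq_right hba.le, abs_of_nonneg (sub_nonneg.2 hcb), abs_of_nonneg (by linarith)]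
  linarith

theorem norm_ae_eq_of_eLpNorm_eq_of_ae_norm_le {α E F : Type*} [MeasurableSpace α]
    {μ : Measure α} [NormedAddCommGroup E] [NormedAddCommGroup F] {p : ℝ≥0∞}
    (hp0 : p ≠ 0) (hp_top : p ≠ ∞) {f : α → E} {g : α → F}
    (hg : AEStronglyMeasurable g μ) (hfg : ∀ᵐ x ∂μ, ‖f x‖ ≤ ‖g x‖)
    (hg_fin : eLpNorm g p μ < ∞) (heq : eLpNorm f p μ = eLpNorm g p μ) :
    ∀ᵐ x ∂μ, ‖f x‖ = ‖g x‖ := by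
  have hq : 0 < p.toReal := ENNReal.toReal_pos hp0 hp_top
  have hint : ∫⁻ x, ‖f x‖ₑ ^ p.toReal ∂μ = ∫⁻ x, ‖g x‖ₑ ^ p.toReal ∂μ := by
    rw [lintegral_rpow_enorm_eq_rpow_eLpNorm' hq, lintegral_rpow_enorm_eq_rpow_eLpNorm' hq,
      ← eLpNorm_eq_eLpNorm' hp0 hp_top, ← eLpNorm_eq_eLpNorm' hp0 hp_top, heq]
  have hpow : (fun x => ‖f x‖ₑ ^ p.toReal) =ᵐ[μ] fun x => ‖g x‖ₑ ^ p.toReal :=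
    ae_eq_of_ae_le_of_lintegral_le
      (hfg.mono fun x hx => ENNReal.rpow_le_rpow (enorm_le_iff_norm_le.2 hx) hq.le)
      (hint ▸ (lintegral_rpow_enorm_lt_top_of_eLpNorm_lt_top hp0 hp_top hg_fin).ne)
      (hg.enorm.pow_const _) hint.ge
  exact hpow.mono fun x hx => enorm_eq_iff_norm_eq.1 (ENNReal.rpow_left_injective hq.ne' hx)

theorem ae_le_of_eLpNorm_min_eq_general {N : ℕ}
    (Ω : Set (EuclideanSpace ℝ (Fin N))) (p : ℝ) (hp : 1 ≤ p)
    (ustar w ud : EuclideanSpace ℝ (Fin N) → ℝ)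
    (hu : Measurable ustar) (hud : Measurable ud)
    (hle : ∀ᵐ x ∂volume.restrict Ω, ud x ≤ w x)
    (hfin : eLpNorm (fun x => ustar x - ud x) (ENNReal.ofReal p)
      (volume.restrict Ω) < ⊤)
    (heq : eLpNorm (fun x => min (ustar x) (w x) - ud x) (ENNReal.ofReal p)
        (volume.restrict Ω) =
      eLpNorm (fun x => ustar x - ud x) (ENNReal.ofReal p) (volume.restrict Ω)) :
    ∀ᵐ x ∂volume.restrict Ω, ustar x ≤ w x := by
  have hp0 : ENNReal.ofReal p ≠ 0 := by simpa using zero_lt_one.trans_le hp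
  have hnorm := norm_ae_eq_of_eLpNorm_eq_of_ae_norm_le hp0 ENNReal.ofReal_ne_top
    (hu.sub hud).aestronglyMeasurable
    (hle.mono fun x hx => abs_min_sub_le_abs_sub (a := ustar x) hx) hfin heq
  filter_upwards [hnorm, hle] with x hx hxle
  by_contra! hwu
  exact (abs_min_sub_lt_abs_sub hxle hwu).ne hx

/-- If `u_d ≤ w` a.e., `v = min{u*, w}`, `1 ≤ p < ∞` and
`‖v − u_d‖_{L^p(Ω)} = ‖u* − u_d‖_{L^p(Ω)} < ∞`, then `u* ≤ w` a.e. in `Ω`. -/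
theorem ae_le_of_eLpNorm_min_eq {N : ℕ}
    (Ω : Set (EuclideanSpace ℝ (Fin N))) (hΩo : IsOpen Ω)
    (hΩb : Bornology.IsBounded Ω) (p : ℝ) (hp : 1 ≤ p)
    (ustar w ud : EuclideanSpace ℝ (Fin N) → ℝ)
    (hu : Measurable ustar) (hw : Measurable w) (hud : Measurable ud)
    (hle : ∀ᵐ x ∂volume.restrict Ω, ud x ≤ w x)
    (hfin : eLpNorm (fun x => ustar x - ud x) (ENNReal.ofReal p)
      (volume.restrict Ω) < ⊤)
    (heq : eLpNorm (fun x => min (ustar x) (w x) - ud x) (ENNReal.ofReal p)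
        (volume.restrict Ω) =
      eLpNorm (fun x => ustar x - ud x) (ENNReal.ofReal p) (volume.restrict Ω)) :
    ∀ᵐ x ∂volume.restrict Ω, ustar x ≤ w x :=
  ae_le_of_eLpNorm_min_eq_general Ω p hp ustar w ud hu hud hle hfin heq
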